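/- Let K : [0,∞) → [0,∞) be nondecreasing, let n ≥ 2 be an integer, let f be analytic on the unit disk 𝔻 with primitive F(z) = ∫₀ᶻ f(w) dw, and let F̃_n(z) = Σ_{i=0}^{n} ((−1)^i / i!) (z* − z)^i F^{(i)}(z*) for |z| > 1, where z* = 1/conj(z). Then there exist constants c₁, c₂ > 0 depending only on n such that for every a ∈ 𝔻: c₁ · ∫_𝔻 |f^{(n)}(ζ)|² (1 − |ζ|)^{2n−2} K(1 − |σ_a(ζ)|²) dA(ζ) ≤ ∫_{|z|>1} (|∂̄F̃_n(z)|²/(|z|^n − 1)²) · K(1 − 1/|σ_a(z)|²) dA(z) ≤ c₂ · ∫_𝔻 |f^{(n)}(ζ)|² (1 − |ζ|)^{2n−2} K(1 − |σ_a(ζ)|²) dA(ζ). -/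

import Mathlib

/-!
The reflection `z ↦ z* = 1/z̄` is an involution mapping `{|z| > 1}` onto `𝔻 \ {0}` with Jacobian
`|ζ|⁻⁴`, and `|σ_a(z*)| = 1/|σ_a(z)|`, so the exterior integral becomes an integral over `𝔻`
carrying the same factor `K(1 - |σ_a(ζ)|²)`. Since `∂̄` is a derivation that kills holomorphic
functions and `∂̄z* = -(z*)²`, the `∂̄`-derivative of the Taylor sum `F̃_n` telescopes to
`((-1)^(n+1)/n!) (z* - z)ⁿ (z*)² F^(n+1)(z*)`. After the substitution the integrand is
`(W_n(|ζ|)/n!)² |f^(n)(ζ)|² K(1 - |σ_a(ζ)|²)` with `W_n(r) = (1 - r²)ⁿ/(1 - rⁿ)`, and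
`1 - r ≤ 1 - rⁿ ≤ n(1 - r)` gives `(1 - r)^(n-1)/n ≤ W_n(r) ≤ 2ⁿ (1 - r)^(n-1)`, so the two
integrands are comparable pointwise.
-/

open MeasureTheory Metric Complex Set
open scoped ENNReal Real

noncomputable section

/-- The Möbius transformation `σ_a(z) = (a - z)/(1 - conj a · z)`. -/
def mobius (a z : ℂ) : ℂ := (a - z) / (1 - (starRingEnd ℂ) a * z)

/-- The Cauchy–Riemann (Wirtinger) operator `∂̄g = (1/2)(∂g/∂x + i ∂g/∂y)`. -/
def dbar (g : ℂ → ℂ) (z : ℂ) : ℂ :=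
  (1 / 2 : ℂ) * (fderiv ℝ g z 1 + Complex.I * fderiv ℝ g z Complex.I)

/-- `z* = 1/conj(z)`. -/
def zstar (z : ℂ) : ℂ := ((starRingEnd ℂ) z)⁻¹

open scoped Nat

section Wirtinger

variable {g h : ℂ → ℂ} {z : ℂ}

lemma dbar_eq_of_hasFDerivAt {D : ℂ →L[ℝ] ℂ} (hD : HasFDerivAt g D z) :
    dbar g z = (1 / 2 : ℂ) * (D 1 + I * D I) := by
  rw [dbar, hD.fderiv]

lemma dbar_id : dbar (fun x => x) z = 0 := by
  have hid : HasFDerivAt (fun x : ℂ => x) (ContinuousLinearMap.id ℝ ℂ) z := hasFDerivAt_id z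
  rw [dbar_eq_of_hasFDerivAt hid]
  simp only [ContinuousLinearMap.id_apply, I_mul_I]
  ring

lemma dbar_sub (hg : DifferentiableAt ℝ g z) (hh : DifferentiableAt ℝ h z) :
    dbar (fun x => g x - h x) z = dbar g z - dbar h z := by
  simp only [dbar, fderiv_fun_sub hg hh, FunLike.coe_sub, Pi.sub_apply]
  ring

lemma dbar_mul (hg : DifferentiableAt ℝ g z) (hh : DifferentiableAt ℝ h z) :
    dbar (fun x => g x * h x) z = g z * dbar h z + h z * dbar g z := by
  simp only [dbar, fderiv_fun_mul hg hh, FunLike.coe_add, Pi.add_apply,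
    FunLike.coe_smul, Pi.smul_apply, smul_eq_mul]
  ring

lemma dbar_sum {ι : Type*} (s : Finset ι) {G : ι → ℂ → ℂ}
    (hG : ∀ i ∈ s, DifferentiableAt ℝ (G i) z) :
    dbar (fun x => ∑ i ∈ s, G i x) z = ∑ i ∈ s, dbar (G i) z := by
  simp only [dbar, fderiv_fun_sum hG, FunLike.coe_sum, Finset.sum_apply, Finset.mul_sum,
    ← Finset.sum_add_distrib]

lemma dbar_comp (hh : DifferentiableAt ℂ h (g z)) (hg : DifferentiableAt ℝ g z) :
    dbar (fun x => h (g x)) z = deriv h (g z) * dbar g z := by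
  have hcomp : HasFDerivAt (fun x => h (g x)) _ z :=
    (hh.hasDerivAt.hasFDerivAt.restrictScalars ℝ).comp z hg.hasFDerivAt
  rw [dbar_eq_of_hasFDerivAt hcomp, dbar]
  simp only [ContinuousLinearMap.comp_apply, ContinuousLinearMap.coe_restrictScalars',
    ContinuousLinearMap.toSpanSingleton_apply, smul_eq_mul]
  ring

end Wirtinger

lemma zstar_involutive : Function.Involutive zstar := fun z => by
  rw [zstar, zstar, map_inv₀, conj_conj, inv_inv]

lemma norm_zstar (z : ℂ) : ‖zstar z‖ = ‖z‖⁻¹ := by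
  simp [zstar]

lemma hasFDerivAt_zstar {z : ℂ} (hz : z ≠ 0) :
    HasFDerivAt zstar ((-zstar z ^ 2) • conjCLE.toContinuousLinearMap) z := by
  have hinv := hasDerivAt_inv ((map_ne_zero (starRingEnd ℂ)).2 hz)
  rw [show -zstar z ^ 2 = -((starRingEnd ℂ) z ^ 2)⁻¹ by rw [zstar, inv_pow]]
  exact hinv.comp_hasFDerivAt z conjCLE.toContinuousLinearMap.hasFDerivAt

lemma differentiableAt_zstar {z : ℂ} (hz : z ≠ 0) : DifferentiableAt ℝ zstar z :=
  (hasFDerivAt_zstar hz).differentiableAt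

lemma dbar_zstar {z : ℂ} (hz : z ≠ 0) : dbar zstar z = -zstar z ^ 2 := by
  rw [dbar_eq_of_hasFDerivAt (hasFDerivAt_zstar hz)]
  simp only [FunLike.coe_smul, Pi.smul_apply, ContinuousLinearEquiv.coe_coe, conjCLE_apply,
    map_one, conj_I, smul_eq_mul]
  linear_combination zstar z ^ 2 / 2 * I_sq

lemma det_smul_conjCLE (c : ℂ) :
    ((c • conjCLE.toContinuousLinearMap : ℂ →L[ℝ] ℂ)).det = -normSq c := by
  have h : ((c • conjCLE.toContinuousLinearMap : ℂ →L[ℝ] ℂ) : ℂ →ₗ[ℝ] ℂ) =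
      (Algebra.lmul ℝ ℂ c).comp conjAe.toLinearEquiv.toLinearMap := by
    ext v
    simp
  rw [ContinuousLinearMap.det, h, LinearMap.det_comp, ← Algebra.norm_apply,
    Algebra.norm_complex_apply, det_conjAe, mul_neg_one]

lemma preimage_zstar_punctured_ball : zstar ⁻¹' (ball 0 1 \ {0}) = {z : ℂ | 1 < ‖z‖} := by
  ext ζ
  have hζ : 1 < ‖ζ‖ → ζ ≠ 0 := fun h => norm_pos_iff.1 (one_pos.trans h)
  have h0 : zstar ζ = 0 ↔ ζ = 0 := by simp [zstar]
  simp only [mem_preimage, mem_sdiff, mem_ball_zero_iff, mem_singleton_iff, norm_zstar, h0,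
    inv_lt_one_iff₀, norm_le_zero_iff, mem_ofPred_eq]
  tauto

lemma lintegral_exterior_eq_lintegral_zstar (h : ℂ → ℝ≥0∞) :
    ∫⁻ z in {z : ℂ | 1 < ‖z‖}, h z =
      ∫⁻ ζ in ball (0 : ℂ) 1 \ {0}, ENNReal.ofReal (‖ζ‖⁻¹ ^ 4) * h (zstar ζ) := by
  have himage : zstar '' (ball (0 : ℂ) 1 \ {0}) = {z : ℂ | 1 < ‖z‖} := by
    rw [zstar_involutive.image_eq_preimage_symm, preimage_zstar_punctured_ball]
  have hderiv : ∀ ζ ∈ ball (0 : ℂ) 1 \ {0},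
      HasFDerivWithinAt zstar ((-zstar ζ ^ 2) • conjCLE.toContinuousLinearMap)
        (ball (0 : ℂ) 1 \ {0}) ζ :=
    fun ζ hζ => (hasFDerivAt_zstar hζ.2).hasFDerivWithinAt
  rw [← himage, lintegral_image_eq_lintegral_abs_det_fderiv_mul volume
    (measurableSet_ball.diff (measurableSet_singleton 0)) hderiv
    zstar_involutive.injective.injOn]
  congr with ζ
  rw [det_smul_conjCLE, abs_neg, abs_of_nonneg (normSq_nonneg _), ← Complex.sq_norm, norm_neg,
    norm_pow, norm_zstar, ← pow_mul]

-- Also at `z = a` and `z = 1/ā`, where both sides are `0` thanks to `x / 0 = 0`.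
lemma mobius_zstar (a : ℂ) {z : ℂ} (hz : z ≠ 0) :
    mobius a (zstar z) = (starRingEnd ℂ) (mobius a z)⁻¹ := by
  have hc : (starRingEnd ℂ) z ≠ 0 := (map_ne_zero _).2 hz
  have hnum : a - ((starRingEnd ℂ) z)⁻¹ = (a * (starRingEnd ℂ) z - 1) / (starRingEnd ℂ) z := by
    field_simp
  have hden : 1 - (starRingEnd ℂ) a * ((starRingEnd ℂ) z)⁻¹ =
      ((starRingEnd ℂ) z - (starRingEnd ℂ) a) / (starRingEnd ℂ) z := by
    field_simp
  rw [mobius, mobius, zstar, hnum, hden, div_div_div_cancel_right₀ hc, inv_div, map_div₀,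
    ← neg_div_neg_eq]
  simp only [map_sub, map_mul, map_one, conj_conj, neg_sub]

lemma norm_zstar_sub_self {z : ℂ} (hz : z ≠ 0) :
    ‖zstar z - z‖ = |1 - ‖z‖ ^ 2| / ‖z‖ := by
  have hc : (starRingEnd ℂ) z ≠ 0 := (map_ne_zero _).2 hz
  have h : zstar z - z = ((1 - ‖z‖ ^ 2 : ℝ) : ℂ) / (starRingEnd ℂ) z := by
    rw [zstar, eq_div_iff hc, sub_mul, inv_mul_cancel₀ hc, mul_conj, ← Complex.sq_norm]
    push_cast; ring
  rw [h, norm_div, norm_real, Real.norm_eq_abs, RCLike.norm_conj]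

lemma dbar_mul_pow_mul_comp_zstar {G : ℂ → ℂ} {z : ℂ} (hz : z ≠ 0)
    (hG : DifferentiableAt ℂ G (zstar z)) (c : ℂ) (i : ℕ) :
    dbar (fun x => c * (zstar x - x) ^ i * G (zstar x)) z =
      -zstar z ^ 2 * (c * (i * (zstar z - z) ^ (i - 1) * G (zstar z) +
        (zstar z - z) ^ i * deriv G (zstar z))) := by
  have hzs := differentiableAt_zstar hz
  have hsub : DifferentiableAt ℝ (fun x => zstar x - x) z := hzs.sub differentiableAt_id
  have hpow : HasDerivAt (fun y => c * y ^ i) (c * (i * (zstar z - z) ^ (i - 1))) (zstar z - z) :=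
    (hasDerivAt_pow i _).const_mul c
  have hGz : DifferentiableAt ℝ (fun x => G (zstar x)) z := (hG.restrictScalars ℝ).comp z hzs
  have hpowz : DifferentiableAt ℝ (fun x => c * (zstar x - x) ^ i) z :=
    (hsub.pow i).const_mul c
  rw [dbar_mul hpowz hGz,
    dbar_comp (h := fun y => c * y ^ i) (g := fun x => zstar x - x) hpow.differentiableAt hsub,
    hpow.deriv, dbar_sub (h := fun x => x) hzs differentiableAt_id, dbar_comp hG hzs,
    dbar_zstar hz, dbar_id]
  ring

lemma sum_range_taylor_deriv_telescope {𝕜 : Type*} [Field 𝕜] [CharZero 𝕜] (x : 𝕜)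
    (G : ℕ → 𝕜) (n : ℕ) :
    ∑ i ∈ Finset.range (n + 1),
        (-1) ^ i / (i ! : 𝕜) * (i * x ^ (i - 1) * G i + x ^ i * G (i + 1)) =
      (-1) ^ n / (n ! : 𝕜) * x ^ n * G (n + 1) := by
  induction n with
  | zero => simp
  | succ n ih =>
    rw [Finset.sum_range_succ, ih, Nat.add_sub_cancel, Nat.factorial_succ]
    push_cast
    field_simp
    ring

/-- The extension `F̃_n`. -/
def reflectedTaylor (n : ℕ) (F : ℂ → ℂ) (z : ℂ) : ℂ :=
  ∑ i ∈ Finset.range (n + 1),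
    ((-1 : ℂ) ^ i / (Nat.factorial i : ℂ)) * (zstar z - z) ^ i * iteratedDeriv i F (zstar z)

lemma dbar_reflectedTaylor {n : ℕ} {F : ℂ → ℂ} {z : ℂ} (hz : z ≠ 0)
    (hF : AnalyticAt ℂ F (zstar z)) :
    dbar (reflectedTaylor n F) z = (-1) ^ (n + 1) / (n ! : ℂ) * (zstar z - z) ^ n *
      zstar z ^ 2 * iteratedDeriv (n + 1) F (zstar z) := by
  have hG : ∀ i, DifferentiableAt ℂ (iteratedDeriv i F) (zstar z) := fun i => by
    rw [iteratedDeriv_eq_iterate]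
    exact (hF.iterated_deriv i).differentiableAt
  have hterm : ∀ i ∈ Finset.range (n + 1), DifferentiableAt ℝ
      (fun x => (-1 : ℂ) ^ i / (i ! : ℂ) * (zstar x - x) ^ i * iteratedDeriv i F (zstar x)) z :=
    fun i _ => by
      have hzs := differentiableAt_zstar hz
      exact (((hzs.sub differentiableAt_id).pow i).const_mul _).mul
        ((hG i).restrictScalars ℝ |>.comp z hzs)
  unfold reflectedTaylor
  rw [dbar_sum _ hterm, Finset.sum_congr rfl fun i _ => dbar_mul_pow_mul_comp_zstar hz (hG i) _ i]
  simp only [← iteratedDeriv_succ, ← Finset.mul_sum]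
  rw [sum_range_taylor_deriv_telescope (zstar z - z) (fun i => iteratedDeriv i F (zstar z))]
  ring

lemma norm_dbar_reflectedTaylor_zstar {n : ℕ} {F : ℂ → ℂ} {ζ : ℂ} (hζ0 : ζ ≠ 0) (hζ1 : ‖ζ‖ ≤ 1)
    (hF : AnalyticAt ℂ F ζ) :
    ‖dbar (reflectedTaylor n F) (zstar ζ)‖ =
      ((1 - ‖ζ‖ ^ 2) / ‖ζ‖) ^ n * ‖ζ‖ ^ 2 / n ! * ‖iteratedDeriv (n + 1) F ζ‖ := by
  have hz : zstar ζ ≠ 0 := by simpa [zstar] using hζ0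
  rw [dbar_reflectedTaylor hz (by rwa [zstar_involutive ζ]), zstar_involutive ζ, norm_mul,
    norm_mul, norm_mul, norm_div, norm_pow, norm_pow, norm_pow, norm_neg, norm_one, one_pow,
    norm_natCast, norm_sub_rev, norm_zstar_sub_self hζ0,
    abs_of_nonneg (by nlinarith [norm_nonneg ζ])]
  ring

lemma one_sub_inv_norm_mobius_zstar_sq (a : ℂ) {ζ : ℂ} (hζ0 : ζ ≠ 0) :
    1 - 1 / ‖mobius a (zstar ζ)‖ ^ 2 = 1 - ‖mobius a ζ‖ ^ 2 := by
  rw [mobius_zstar a hζ0, RCLike.norm_conj, norm_inv, inv_pow, one_div, inv_inv]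

def reflectionWeight (n : ℕ) (r : ℝ) : ℝ := (1 - r ^ 2) ^ n / (1 - r ^ n)

lemma jacobian_mul_exterior_integrand_zstar (K : ℝ → ℝ) (a : ℂ) {n : ℕ} (hn : n ≠ 0) {F : ℂ → ℂ} {ζ : ℂ}
    (hζ0 : ζ ≠ 0) (hζ1 : ‖ζ‖ < 1) (hF : AnalyticAt ℂ F ζ) :
    ENNReal.ofReal (‖ζ‖⁻¹ ^ 4) *
        ENNReal.ofReal (‖dbar (reflectedTaylor n F) (zstar ζ)‖ ^ 2 / (‖zstar ζ‖ ^ n - 1) ^ 2 *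
          K (1 - 1 / ‖mobius a (zstar ζ)‖ ^ 2)) =
      ENNReal.ofReal ((reflectionWeight n ‖ζ‖ / n !) ^ 2 *
        (‖iteratedDeriv (n + 1) F ζ‖ ^ 2 * K (1 - ‖mobius a ζ‖ ^ 2))) := by
  have hr : 0 < ‖ζ‖ := norm_pos_iff.2 hζ0
  have hrn : ‖ζ‖ ^ n < 1 := pow_lt_one₀ hr.le hζ1 hn
  rw [← ENNReal.ofReal_mul (by positivity), norm_dbar_reflectedTaylor_zstar hζ0 hζ1.le hF,
    one_sub_inv_norm_mobius_zstar_sq a hζ0, norm_zstar, reflectionWeight]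
  congr 1
  have hsub : ‖ζ‖⁻¹ ^ n - 1 = (1 - ‖ζ‖ ^ n) / ‖ζ‖ ^ n := by
    rw [eq_div_iff (by positivity), sub_mul, ← mul_pow, inv_mul_cancel₀ hr.ne', one_pow, one_mul]
  have hrn' : (1 : ℝ) - ‖ζ‖ ^ n ≠ 0 := by linarith
  rw [hsub, div_pow]
  field_simp

lemma lintegral_exterior_dbar_reflectedTaylor (K : ℝ → ℝ) (a : ℂ) {n : ℕ} (hn : n ≠ 0)
    {F : ℂ → ℂ} (hF : AnalyticOnNhd ℂ F (ball 0 1)) :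
    ∫⁻ z in {z : ℂ | 1 < ‖z‖},
        ENNReal.ofReal (‖dbar (reflectedTaylor n F) z‖ ^ 2 / (‖z‖ ^ n - 1) ^ 2 *
          K (1 - 1 / ‖mobius a z‖ ^ 2)) =
      ∫⁻ ζ in ball (0 : ℂ) 1, ENNReal.ofReal ((reflectionWeight n ‖ζ‖ / n !) ^ 2 *
        (‖iteratedDeriv (n + 1) F ζ‖ ^ 2 * K (1 - ‖mobius a ζ‖ ^ 2))) := by
  have hpunct : (ball (0 : ℂ) 1 \ {0} : Set ℂ) =ᵐ[volume] ball (0 : ℂ) 1 :=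
    sdiff_ae_eq_self.2 (measure_mono_null inter_subset_right (measure_singleton 0))
  rw [lintegral_exterior_eq_lintegral_zstar, Measure.restrict_congr_set hpunct.symm]
  refine setLIntegral_congr_fun (measurableSet_ball.diff (measurableSet_singleton 0))
    fun ζ hζ => ?_
  have hζ1 : ‖ζ‖ < 1 := mem_ball_zero_iff.1 hζ.1
  exact jacobian_mul_exterior_integrand_zstar K a hn hζ.2 hζ1 (hF ζ hζ.1)

lemma div_natCast_le_reflectionWeight {n : ℕ} (hn : n ≠ 0) {r : ℝ} (hr0 : 0 ≤ r) (hr1 : r < 1) :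
    (1 - r) ^ (n - 1) / n ≤ reflectionWeight n r := by
  have hpos : 0 < 1 - r ^ n := by linarith [pow_lt_one₀ hr0 hr1 hn]
  have hbern : 1 - r ^ n ≤ n * (1 - r) := by
    nlinarith [one_add_mul_sub_le_pow (by linarith : (-1 : ℝ) ≤ r) n]
  rw [reflectionWeight, div_le_div_iff₀ (by positivity) hpos]
  obtain ⟨m, rfl⟩ := Nat.exists_eq_add_one_of_ne_zero hn
  rw [Nat.add_sub_cancel]
  calc (1 - r) ^ m * (1 - r ^ (m + 1)) ≤ (1 - r) ^ m * ((m + 1 : ℕ) * (1 - r)) := by gcongr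
    _ = (1 - r) ^ (m + 1) * 1 * (m + 1 : ℕ) := by ring
    _ ≤ (1 - r) ^ (m + 1) * (1 + r) ^ (m + 1) * (m + 1 : ℕ) := by
        gcongr; exact one_le_pow₀ (by linarith)
    _ = (1 - r ^ 2) ^ (m + 1) * (m + 1 : ℕ) := by rw [← mul_pow]; ring

lemma reflectionWeight_le_two_pow_mul {n : ℕ} (hn : n ≠ 0) {r : ℝ} (hr0 : 0 ≤ r) (hr1 : r < 1) :
    reflectionWeight n r ≤ 2 ^ n * (1 - r) ^ (n - 1) := by
  have hpos : 0 < 1 - r := by linarith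
  have hle : 1 - r ≤ 1 - r ^ n := by linarith [pow_le_of_le_one hr0 hr1.le hn]
  rw [reflectionWeight, div_le_iff₀ (hpos.trans_le hle)]
  obtain ⟨m, rfl⟩ := Nat.exists_eq_add_one_of_ne_zero hn
  rw [Nat.add_sub_cancel]
  calc (1 - r ^ 2) ^ (m + 1) = (1 + r) ^ (m + 1) * ((1 - r) ^ m * (1 - r)) := by
        rw [← pow_succ, ← mul_pow]; ring
    _ ≤ 2 ^ (m + 1) * ((1 - r) ^ m * (1 - r ^ (m + 1))) := by
        gcongr
        linarith
    _ = 2 ^ (m + 1) * (1 - r) ^ m * (1 - r ^ (m + 1)) := by ring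

lemma sq_reflectionWeight_div_factorial_bounds {n : ℕ} (hn : n ≠ 0) {r : ℝ} (hr0 : 0 ≤ r)
    (hr1 : r < 1) :
    ((n ! : ℝ) ^ 2 * n ^ 2)⁻¹ * (1 - r) ^ (2 * n - 2) ≤ (reflectionWeight n r / n !) ^ 2 ∧
      (reflectionWeight n r / n !) ^ 2 ≤ 4 ^ n / (n ! : ℝ) ^ 2 * (1 - r) ^ (2 * n - 2) := by
  have hpow : (1 - r) ^ (2 * n - 2) = ((1 - r) ^ (n - 1)) ^ 2 := by
    rw [← pow_mul]; congr 1; omega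
  have hlow := div_natCast_le_reflectionWeight hn hr0 hr1
  have hup := reflectionWeight_le_two_pow_mul hn hr0 hr1
  have h1r : 0 ≤ 1 - r := by linarith
  rw [hpow]
  constructor
  · calc ((n ! : ℝ) ^ 2 * n ^ 2)⁻¹ * ((1 - r) ^ (n - 1)) ^ 2
          = ((1 - r) ^ (n - 1) / n / n !) ^ 2 := by field_simp
      _ ≤ (reflectionWeight n r / n !) ^ 2 := by gcongr
  · calc (reflectionWeight n r / n !) ^ 2 ≤ (2 ^ n * (1 - r) ^ (n - 1) / n !) ^ 2 := by
          have : 0 ≤ reflectionWeight n r := le_trans (by positivity) hlow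
          gcongr
      _ = 4 ^ n / (n ! : ℝ) ^ 2 * ((1 - r) ^ (n - 1)) ^ 2 := by
          rw [show (4 : ℝ) ^ n = (2 ^ n) ^ 2 by rw [← pow_mul, mul_comm, pow_mul]; norm_num]
          ring

lemma ofReal_mul_le_ofReal_mul_of_le {α β : ℝ} (hα : 0 ≤ α) (hαβ : α ≤ β) (x : ℝ) :
    ENNReal.ofReal (α * x) ≤ ENNReal.ofReal (β * x) := by
  rcases le_total 0 x with hx | hx
  · exact ENNReal.ofReal_le_ofReal (mul_le_mul_of_nonneg_right hαβ hx)
  · rw [ENNReal.ofReal_of_nonpos (mul_nonpos_of_nonneg_of_nonpos hα hx)]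
    exact zero_le

lemma iteratedDeriv_succ_eq_of_hasDerivAt {𝕜 E : Type*} [NontriviallyNormedField 𝕜]
    [NormedAddCommGroup E] [NormedSpace 𝕜 E] {F f : 𝕜 → E} {U : Set 𝕜} (hU : IsOpen U)
    (hF : ∀ z ∈ U, HasDerivAt F (f z) z) (n : ℕ) {w : 𝕜} (hw : w ∈ U) :
    iteratedDeriv (n + 1) F w = iteratedDeriv n f w := by
  rw [iteratedDeriv_succ']
  refine Filter.EventuallyEq.iteratedDeriv_eq _ ?_
  filter_upwards [hU.mem_nhds hw] with u hu
  exact (hF u hu).deriv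

theorem exterior_interior_comparison_qk_general
    (K : ℝ → ℝ)
    (n : ℕ) (hn : 2 ≤ n)
    (f F : ℂ → ℂ)
    (hFprim : ∀ z ∈ ball (0 : ℂ) 1, HasDerivAt F (f z) z)
    (Ftil : ℂ → ℂ)
    (hFtil : ∀ z : ℂ, Ftil z =
      ∑ i ∈ Finset.range (n + 1),
        ((-1 : ℂ) ^ i / (Nat.factorial i : ℂ)) * (zstar z - z) ^ i *
          iteratedDeriv i F (zstar z)) :
    ∃ c₁ c₂ : ℝ, 0 < c₁ ∧ 0 < c₂ ∧ ∀ a ∈ ball (0 : ℂ) 1,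
      ENNReal.ofReal c₁ *
          (∫⁻ ζ in ball (0 : ℂ) 1,
            ENNReal.ofReal (‖iteratedDeriv n f ζ‖ ^ 2 * (1 - ‖ζ‖) ^ (2 * n - 2) *
              K (1 - ‖mobius a ζ‖ ^ 2))) ≤
        (∫⁻ z in {z : ℂ | 1 < ‖z‖},
          ENNReal.ofReal (‖dbar Ftil z‖ ^ 2 / (‖z‖ ^ n - 1) ^ 2 *
            K (1 - 1 / ‖mobius a z‖ ^ 2))) ∧
      (∫⁻ z in {z : ℂ | 1 < ‖z‖},
          ENNReal.ofReal (‖dbar Ftil z‖ ^ 2 / (‖z‖ ^ n - 1) ^ 2 *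
            K (1 - 1 / ‖mobius a z‖ ^ 2))) ≤
        ENNReal.ofReal c₂ *
          (∫⁻ ζ in ball (0 : ℂ) 1,
            ENNReal.ofReal (‖iteratedDeriv n f ζ‖ ^ 2 * (1 - ‖ζ‖) ^ (2 * n - 2) *
              K (1 - ‖mobius a ζ‖ ^ 2))) := by
  have hn0 : n ≠ 0 := by omega
  have hF : AnalyticOnNhd ℂ F (ball 0 1) := DifferentiableOn.analyticOnNhd
    (fun z hz => (hFprim z hz).differentiableAt.differentiableWithinAt) isOpen_ball
  obtain rfl : Ftil = reflectedTaylor n F := funext hFtil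
  refine ⟨((n ! : ℝ) ^ 2 * n ^ 2)⁻¹, 4 ^ n / (n ! : ℝ) ^ 2, by positivity, by positivity,
    fun a _ => ?_⟩
  rw [lintegral_exterior_dbar_reflectedTaylor K a hn0 hF,
    ← lintegral_const_mul' _ _ ENNReal.ofReal_ne_top,
    ← lintegral_const_mul' _ _ ENNReal.ofReal_ne_top]
  constructor
  all_goals
    refine setLIntegral_mono' measurableSet_ball fun ζ hζ => ?_
    have hζ1 := mem_ball_zero_iff.1 hζ
    obtain ⟨hlow, hup⟩ := sq_reflectionWeight_div_factorial_bounds hn0 (norm_nonneg ζ) hζ1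
    rw [iteratedDeriv_succ_eq_of_hasDerivAt isOpen_ball hFprim n hζ,
      ← ENNReal.ofReal_mul (by positivity)]
  · have hr : 0 ≤ 1 - ‖ζ‖ := by linarith
    convert ofReal_mul_le_ofReal_mul_of_le (by positivity) hlow _ using 2
    ring
  · convert ofReal_mul_le_ofReal_mul_of_le (sq_nonneg _) hup _ using 2
    ring

/-- The change-of-variables identity: the exterior `∂̄`-integral of the explicit
extension `F̃_n` is two-sidedly comparable, uniformly in `a ∈ 𝔻`, to the interior
weighted integral of `|f^{(n)}|²`. -/
theorem exterior_interior_comparison_qk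
    (K : ℝ → ℝ)
    (hKmono : MonotoneOn K (Set.Ici (0 : ℝ)))
    (hKnn : ∀ t : ℝ, 0 ≤ t → 0 ≤ K t)
    (n : ℕ) (hn : 2 ≤ n)
    (f F : ℂ → ℂ)
    (hf : DifferentiableOn ℂ f (ball (0 : ℂ) 1))
    (hF0 : F 0 = 0)
    (hFprim : ∀ z ∈ ball (0 : ℂ) 1, HasDerivAt F (f z) z)
    (Ftil : ℂ → ℂ)
    (hFtil : ∀ z : ℂ, Ftil z =
      ∑ i ∈ Finset.range (n + 1),
        ((-1 : ℂ) ^ i / (Nat.factorial i : ℂ)) * (zstar z - z) ^ i *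
          iteratedDeriv i F (zstar z)) :
    ∃ c₁ c₂ : ℝ, 0 < c₁ ∧ 0 < c₂ ∧ ∀ a ∈ ball (0 : ℂ) 1,
      ENNReal.ofReal c₁ *
          (∫⁻ ζ in ball (0 : ℂ) 1,
            ENNReal.ofReal (‖iteratedDeriv n f ζ‖ ^ 2 * (1 - ‖ζ‖) ^ (2 * n - 2) *
              K (1 - ‖mobius a ζ‖ ^ 2))) ≤
        (∫⁻ z in {z : ℂ | 1 < ‖z‖},
          ENNReal.ofReal (‖dbar Ftil z‖ ^ 2 / (‖z‖ ^ n - 1) ^ 2 *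
            K (1 - 1 / ‖mobius a z‖ ^ 2))) ∧
      (∫⁻ z in {z : ℂ | 1 < ‖z‖},
          ENNReal.ofReal (‖dbar Ftil z‖ ^ 2 / (‖z‖ ^ n - 1) ^ 2 *
            K (1 - 1 / ‖mobius a z‖ ^ 2))) ≤
        ENNReal.ofReal c₂ *
          (∫⁻ ζ in ball (0 : ℂ) 1,
            ENNReal.ofReal (‖iteratedDeriv n f ζ‖ ^ 2 * (1 - ‖ζ‖) ^ (2 * n - 2) *
              K (1 - ‖mobius a ζ‖ ^ 2))) :=
  exterior_interior_comparison_qk_general K n hn f F hFprim Ftil hFtil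

end
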